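/- Let $X$ be a Banach space whose modulus of smoothness satisfies $\rho(u) \le \gamma u^q$ for some $1 < q \le 2$ and $\gamma > 0$. Let $\mathcal{D}$ be a dictionary in $X$ and $f \in A_1(\mathcal{D})$ (the closed convex hull of $\mathcal{D}$). Let $p := q/(q-1)$ and $\epsilon_n := \beta \gamma^{1/q} n^{-1/p}$ for a fixed $\beta > 0$. Then the residuals $f_m^{i,\epsilon}$ of the Incremental Algorithm IA($\epsilon$) satisfy $\|f_m^{i,\epsilon}\| \le C(\beta)\gamma^{1/q} m^{-1/p}$ for all $m \ge 1$. -/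

import Mathlib

/-!
Write `f_m = f - G_m`. The update reads `f_m = f_{m-1} - (1/m) ((φ_m - f) + f_{m-1})`.
Testing `f_{m-1} + y` against the norming functional of `f_{m-1}` and using
`‖x + y‖ + ‖x - y‖ ≤ 2 ‖x‖ (1 + ρ(‖y‖ / ‖x‖))` gives
`‖f_m‖ ≤ (1 - 1/m) ‖f_{m-1}‖ + ε_m / m + 2 γ ‖f_{m-1}‖ (2 / (m ‖f_{m-1}‖))^q`.
With `K = γ^{1/q}` and `C = 2β + 16`, induction on `m` closes: when
`‖f_{m-1}‖ ≥ (C / 2) K m^{-1/p}`, the last term is at most `8 K m^{-1/p} / m`, so the last two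
terms together are at most `(C / 2) K m^{-1/p} / m`, exactly the gain in the decay
`(1 - 1/m) (m-1)^{-1/p} ≤ m^{-1/p} (1 - 1/(2m))`. Otherwise the trivial bound
`‖f_m‖ ≤ ‖f_{m-1}‖ + 2/m` suffices, because a nontrivial space has `γ 2^q ≥ ρ(2) ≥ 1`.
-/

noncomputable def modulusOfSmoothness (X : Type*) [NormedAddCommGroup X] [NormedSpace ℝ X]
    (u : ℝ) : ℝ :=
  ⨆ x : {x : X // ‖x‖ = 1}, ⨆ y : {y : X // ‖y‖ = 1},
    ((‖x.1 + u • y.1‖ + ‖x.1 - u • y.1‖) / 2 - 1)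

section Smoothness

variable {X : Type*} [NormedAddCommGroup X] [NormedSpace ℝ X]

lemma le_modulusOfSmoothness {u : ℝ} (hu : 0 ≤ u) (x y : {z : X // ‖z‖ = 1}) :
    (‖x.1 + u • y.1‖ + ‖x.1 - u • y.1‖) / 2 - 1 ≤ modulusOfSmoothness X u := by
  have hbound (a b : {z : X // ‖z‖ = 1}) :
      (‖a.1 + u • b.1‖ + ‖a.1 - u • b.1‖) / 2 - 1 ≤ u := by
    have h₁ := norm_add_le a.1 (u • b.1)
    have h₂ := norm_sub_le a.1 (u • b.1)
    rw [norm_smul, a.2, b.2, Real.norm_of_nonneg hu] at h₁ h₂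
    linarith
  have : Nonempty {z : X // ‖z‖ = 1} := ⟨x⟩
  calc (‖x.1 + u • y.1‖ + ‖x.1 - u • y.1‖) / 2 - 1
      ≤ ⨆ b : {z : X // ‖z‖ = 1}, (‖x.1 + u • b.1‖ + ‖x.1 - u • b.1‖) / 2 - 1 :=
        le_ciSup ⟨u, by rintro _ ⟨b, rfl⟩; exact hbound x b⟩ y
    _ ≤ modulusOfSmoothness X u :=
        le_ciSup (f := fun a : {z : X // ‖z‖ = 1} =>
            ⨆ b : {z : X // ‖z‖ = 1}, (‖a.1 + u • b.1‖ + ‖a.1 - u • b.1‖) / 2 - 1)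
          ⟨u, by rintro _ ⟨a, rfl⟩; exact ciSup_le (hbound a)⟩ x

lemma sub_one_le_modulusOfSmoothness [Nontrivial X] {u : ℝ} (hu : 0 ≤ u) :
    u - 1 ≤ modulusOfSmoothness X u := by
  obtain ⟨e, he⟩ := exists_norm_eq X zero_le_one
  refine le_trans ?_ (le_modulusOfSmoothness hu ⟨e, he⟩ ⟨e, he⟩)
  have h₁ : e + u • e = (1 + u) • e := by module
  have h₂ : e - u • e = (1 - u) • e := by module
  rw [h₁, h₂, norm_smul, norm_smul, he, Real.norm_of_nonneg (by linarith), Real.norm_eq_abs]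
  linarith [neg_abs_le (1 - u)]

variable {γ q : ℝ}

lemma half_le_rpow_one_div_of_modulusOfSmoothness_le [Nontrivial X]
    (hρ : ∀ u, 0 < u → modulusOfSmoothness X u ≤ γ * u ^ q) (hq : 0 < q) :
    1 / 2 ≤ γ ^ (1 / q) := by
  have h : 1 ≤ γ * 2 ^ q := by
    linarith [sub_one_le_modulusOfSmoothness (X := X) zero_le_two, hρ 2 two_pos]
  have hγ : 0 < γ := pos_of_mul_pos_left (one_pos.trans_le h) (by positivity)
  have h' : (1 / 2) ^ q ≤ γ := by
    rw [Real.div_rpow zero_le_one zero_le_two, Real.one_rpow, div_le_iff₀ (by positivity)]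
    exact h
  calc 1 / 2 = ((1 / 2) ^ q) ^ (1 / q) := by
        rw [one_div q, Real.rpow_rpow_inv (by norm_num) hq.ne']
    _ ≤ γ ^ (1 / q) := by gcongr

lemma norm_add_add_norm_sub_le
    (hρ : ∀ u, 0 < u → modulusOfSmoothness X u ≤ γ * u ^ q) {x y : X} (hx : x ≠ 0)
    (hy : y ≠ 0) :
    ‖x + y‖ + ‖x - y‖ ≤ 2 * ‖x‖ + 2 * γ * ‖x‖ * (‖y‖ / ‖x‖) ^ q := by
  have ha := norm_pos_iff.2 hx
  have hb := norm_pos_iff.2 hy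
  have hu : 0 < ‖y‖ / ‖x‖ := div_pos hb ha
  have hunit {z : X} (hz : 0 < ‖z‖) : ‖‖z‖⁻¹ • z‖ = 1 := by
    rw [norm_smul, norm_inv, norm_norm, inv_mul_cancel₀ hz.ne']
  have key := (le_modulusOfSmoothness hu.le ⟨_, hunit ha⟩ ⟨_, hunit hb⟩).trans (hρ _ hu)
  have hscale : (‖y‖ / ‖x‖) • ((‖y‖⁻¹ : ℝ) • y) = (‖x‖⁻¹ : ℝ) • y := by
    rw [smul_smul]
    congr 1
    field_simp
  simp only [hscale, ← smul_add, ← smul_sub, norm_smul, norm_inv, norm_norm] at key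
  rw [← mul_add, div_sub_one two_ne_zero, div_le_iff₀ two_pos, sub_le_iff_le_add,
    inv_mul_le_iff₀ ha] at key
  linarith

lemma norm_sub_le_of_norming
    (hρ : ∀ u, 0 < u → modulusOfSmoothness X u ≤ γ * u ^ q) (hq : 0 < q) {F : X →L[ℝ] ℝ}
    (hF : ‖F‖ ≤ 1) {x : X} (hFx : F x = ‖x‖) (hx : x ≠ 0) (y : X) :
    ‖x - y‖ ≤ ‖x‖ - F y + 2 * γ * ‖x‖ * (‖y‖ / ‖x‖) ^ q := by
  rcases eq_or_ne y 0 with rfl | hy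
  · simp [Real.zero_rpow hq.ne']
  have hFxy : F (x + y) ≤ ‖x + y‖ := by
    simpa using (le_abs_self _).trans (F.le_of_opNorm_le hF (x + y))
  rw [map_add, hFx] at hFxy
  linarith [norm_add_add_norm_sub_le hρ hx hy]

lemma norm_sub_smul_add_le_of_norming
    (hρ : ∀ u, 0 < u → modulusOfSmoothness X u ≤ γ * u ^ q) (hq : 0 < q) (hγ : 0 ≤ γ)
    {F : X →L[ℝ] ℝ} (hF : ‖F‖ ≤ 1) {x g : X} (hFx : F x = ‖x‖) (hx : x ≠ 0) {ε c : ℝ}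
    (hg : -ε ≤ F g) (hgx : ‖g + x‖ ≤ 2) (hc : 0 ≤ c) :
    ‖x - c • (g + x)‖ ≤ (1 - c) * ‖x‖ + c * ε + 2 * γ * ‖x‖ * (2 * c / ‖x‖) ^ q := by
  have hy : ‖c • (g + x)‖ ≤ 2 * c := by
    rw [norm_smul, Real.norm_of_nonneg hc]
    nlinarith
  have hmono :
      2 * γ * ‖x‖ * (‖c • (g + x)‖ / ‖x‖) ^ q ≤ 2 * γ * ‖x‖ * (2 * c / ‖x‖) ^ q := by
    gcongr
  have hstep := norm_sub_le_of_norming hρ hq hF hFx hx (c • (g + x))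
  rw [map_smul, map_add, hFx, smul_eq_mul] at hstep
  nlinarith

end Smoothness

lemma mem_of_incremental_average {E : Type*} [AddCommGroup E] [Module ℝ E] {s : Set E}
    (hs : Convex ℝ s) {φ G : ℕ → E} (h₀ : G 0 ∈ s) (hφ : ∀ n, 1 ≤ n → φ n ∈ s)
    (hG : ∀ n : ℕ, 1 ≤ n → G n = (1 - 1 / (n : ℝ)) • G (n - 1) + ((n : ℝ))⁻¹ • φ n)
    (n : ℕ) : G n ∈ s := by
  induction n with
  | zero => exact h₀
  | succ k ih =>
    rw [hG (k + 1) k.succ_pos, Nat.add_sub_cancel]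
    have hk : (1 : ℝ) ≤ (k + 1 : ℕ) := by exact_mod_cast k.succ_pos
    refine hs ih (hφ (k + 1) k.succ_pos) ?_ (by positivity) (by ring)
    rw [sub_nonneg, div_le_one (by positivity)]
    exact hk

lemma rpow_neg_mul_one_sub_inv_le {r m : ℝ} (hr₀ : 0 ≤ r) (hr : r ≤ 1 / 2) (hm : 0 < m) :
    m ^ (-r) * (1 - (m + 1)⁻¹) ≤ (m + 1) ^ (-r) * (1 - (m + 1)⁻¹ / 2) := by
  have hm₁ : 0 < m + 1 := by linarith
  have hc : (m + 1)⁻¹ ≤ 1 := inv_le_one_of_one_le₀ (by linarith)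
  have hid : m ^ (-r) * (1 - (m + 1)⁻¹) = (m + 1) ^ (-r) * (1 - (m + 1)⁻¹) ^ (1 - r) := by
    have : 1 - (m + 1)⁻¹ = m / (m + 1) := by field_simp; ring
    rw [this, Real.div_rpow hm.le hm₁.le, Real.rpow_sub hm, Real.rpow_sub hm₁, Real.rpow_one,
      Real.rpow_one, Real.rpow_neg hm.le, Real.rpow_neg hm₁.le]
    field_simp
  rw [hid]
  gcongr
  calc (1 - (m + 1)⁻¹) ^ (1 - r) = (1 + -(m + 1)⁻¹) ^ (1 - r) := by rw [sub_eq_add_neg]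
    _ ≤ 1 + (1 - r) * -(m + 1)⁻¹ :=
        rpow_one_add_le_one_add_mul_self (by linarith) (by linarith) (by linarith)
    _ ≤ 1 - (m + 1)⁻¹ / 2 := by nlinarith [inv_pos.2 hm₁]

lemma mul_mul_two_mul_inv_div_rpow_le {q γ a n : ℝ} (hq₁ : 1 < q) (hq₂ : q ≤ 2) (hγ : 0 < γ)
    (hn : 0 < n) (ha : γ ^ (1 / q) * n ^ (-(1 - 1 / q)) ≤ a) :
    γ * a * (2 * n⁻¹ / a) ^ q ≤ 4 * γ ^ (1 / q) * n ^ (-(1 - 1 / q)) * n⁻¹ := by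
  set K := γ ^ (1 / q)
  set t := n ^ (-(1 - 1 / q))
  have hK : 0 < K := by positivity
  have ht : 0 < t := by positivity
  have ha₀ : 0 < a := (mul_pos hK ht).trans_le ha
  have hγK : γ * K ^ (1 - q) = K := by
    have hKq : K ^ q = γ := by
      rw [← Real.rpow_mul hγ.le, one_div_mul_cancel (by linarith), Real.rpow_one]
    rw [← hKq, ← Real.rpow_add hK, add_sub_cancel, Real.rpow_one]
  have htn : t ^ (1 - q) * n ^ (-q) = t * n⁻¹ := by
    rw [← Real.rpow_mul hn.le, ← Real.rpow_add hn, ← Real.rpow_neg_one, ← Real.rpow_add hn]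
    congr 1
    field_simp
    ring
  have h2q : (2 : ℝ) ^ q ≤ 4 := by
    calc (2 : ℝ) ^ q ≤ 2 ^ (2 : ℝ) := Real.rpow_le_rpow_of_exponent_le one_le_two hq₂
      _ = 4 := by norm_num
  calc γ * a * (2 * n⁻¹ / a) ^ q = 2 ^ q * (γ * a ^ (1 - q)) * n ^ (-q) := by
        rw [Real.div_rpow (by positivity) ha₀.le, Real.mul_rpow zero_le_two (by positivity),
          Real.rpow_sub ha₀, Real.rpow_one, Real.inv_rpow hn.le, Real.rpow_neg hn.le]
        field_simp
    _ ≤ 4 * (γ * (K * t) ^ (1 - q)) * n ^ (-q) := by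
        gcongr ?_ * (γ * ?_) * _
        exact Real.rpow_le_rpow_of_nonpos (by positivity) ha (by linarith)
    _ = 4 * K * t * n⁻¹ := by
        rw [Real.mul_rpow hK.le ht.le]
        linear_combination (4 * t ^ (1 - q) * n ^ (-q)) * hγK + 4 * K * htn

theorem le_of_incremental_recursion {q γ β : ℝ} (hq₁ : 1 < q) (hq₂ : q ≤ 2) (hγ : 0 < γ)
    (hβ : 0 ≤ β) (hK : 1 / 2 ≤ γ ^ (1 / q)) {a : ℕ → ℝ} (h₁ : a 1 ≤ 2)
    (hstep : ∀ m, 1 ≤ m → a (m + 1) ≤ a m + 2 * ((m : ℝ) + 1)⁻¹)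
    (hsmooth : ∀ m, 1 ≤ m → 0 < a m → a (m + 1) ≤ (1 - ((m : ℝ) + 1)⁻¹) * a m
      + ((m : ℝ) + 1)⁻¹ * (β * γ ^ (1 / q) * ((m : ℝ) + 1) ^ (-(1 - 1 / q)))
      + 2 * γ * a m * (2 * ((m : ℝ) + 1)⁻¹ / a m) ^ q)
    (m : ℕ) (hm : 1 ≤ m) :
    a m ≤ (2 * β + 16) * γ ^ (1 / q) * (m : ℝ) ^ (-(1 - 1 / q)) := by
  set K := γ ^ (1 / q)
  set C := 2 * β + 16
  have hr₀ : 0 ≤ 1 - 1 / q := by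
    rw [sub_nonneg, div_le_one (by linarith)]; linarith
  have hr : 1 - 1 / q ≤ 1 / 2 := by
    linarith [one_div_le_one_div_of_le (by linarith : (0:ℝ) < q) hq₂]
  induction m, hm using Nat.le_induction with
  | base =>
    rw [Nat.cast_one, Real.one_rpow, mul_one]
    nlinarith
  | succ m hm ih =>
    have hm₀ : (0 : ℝ) < m := by exact_mod_cast hm
    push_cast
    set n : ℝ := (m : ℝ) + 1
    set t := n ^ (-(1 - 1 / q))
    have hn : 1 ≤ n := by linarith
    have ht : 0 < t := by positivity
    have hct : n⁻¹ ≤ t := by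
      rw [← Real.rpow_neg_one]
      exact Real.rpow_le_rpow_of_exponent_le hn (by linarith)
    rcases le_or_gt (a m) ((β + 8) * K * t) with hsmall | hlarge
    · have h2K : 2 ≤ (β + 8) * K := by nlinarith
      nlinarith [hstep m hm]
    · have hKt : 0 < K * t := by positivity
      have ha : K * t ≤ a m := by nlinarith
      have hdecay : (m : ℝ) ^ (-(1 - 1 / q)) * (1 - n⁻¹) ≤ t * (1 - n⁻¹ / 2) :=
        rpow_neg_mul_one_sub_inv_le hr₀ hr hm₀
      have hterm : γ * a m * (2 * n⁻¹ / a m) ^ q ≤ 4 * K * t * n⁻¹ :=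
        mul_mul_two_mul_inv_div_rpow_le hq₁ hq₂ hγ (by positivity) ha
      have hc : 0 ≤ 1 - n⁻¹ := by rw [sub_nonneg]; exact inv_le_one_of_one_le₀ hn
      calc a (m + 1)
          ≤ (1 - n⁻¹) * a m + n⁻¹ * (β * K * t) + 2 * γ * a m * (2 * n⁻¹ / a m) ^ q :=
            hsmooth m hm (hKt.trans_le ha)
        _ ≤ C * K * ((m : ℝ) ^ (-(1 - 1 / q)) * (1 - n⁻¹)) + n⁻¹ * (β * K * t)
            + 2 * (4 * K * t * n⁻¹) := by
          gcongr ?_ + _ + ?_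
          · nlinarith
          · linarith
        _ ≤ C * K * (t * (1 - n⁻¹ / 2)) + n⁻¹ * (β * K * t) + 2 * (4 * K * t * n⁻¹) := by
          gcongr
        _ = C * K * t := by ring

theorem stmt15.{u} (q γ β p : ℝ) (hq1 : 1 < q) (hq2 : q ≤ 2) (hγ : 0 < γ) (hβ : 0 < β)
    (hp : p = q / (q - 1)) :
    ∃ C : ℝ, 0 < C ∧
      ∀ (X : Type u) (_ : NormedAddCommGroup X), ∀ (_ : NormedSpace ℝ X) (_ : CompleteSpace X),
      ∀ D : Set X, (∀ g ∈ D, ‖g‖ ≤ 1) →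
      -- modulus of smoothness bound `ρ(u) ≤ γ u^q`
      (∀ u : ℝ, 0 < u →
        (⨆ x : {x : X // ‖x‖ = 1}, ⨆ y : {y : X // ‖y‖ = 1},
          ((‖x.1 + u • y.1‖ + ‖x.1 - u • y.1‖) / 2 - 1)) ≤ γ * u ^ q) →
      ∀ f ∈ closure (convexHull ℝ D),
      ∀ (φ G : ℕ → X) (Fn : ℕ → X →L[ℝ] ℝ),
        G 0 = 0 →
        (∀ n : ℕ, 1 ≤ n → φ n ∈ D) →
        -- `Fn n` is a norming functional of the residual `f - G n`
        (∀ n : ℕ, ‖Fn n‖ = 1 ∧ Fn n (f - G n) = ‖f - G n‖) →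
        -- greedy step with schedule `ε_n = β γ^{1/q} n^{-1/p}`
        (∀ n : ℕ, 1 ≤ n →
          -(β * γ ^ (1 / q) * (n : ℝ) ^ (-(1 / p))) ≤ Fn (n - 1) (φ n - f)) →
        (∀ n : ℕ, 1 ≤ n → G n = (1 - 1 / (n : ℝ)) • G (n - 1) + ((n : ℝ))⁻¹ • φ n) →
        ∀ m : ℕ, 1 ≤ m → ‖f - G m‖ ≤ C * γ ^ (1 / q) * (m : ℝ) ^ (-(1 / p)) := by
  refine ⟨2 * β + 16, by positivity, ?_⟩
  intro X _ _ _ D hD hρ f hf φ G Fn hG0 hφD hFn hgreedy hG m hm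
  have hq : 0 < q := by linarith
  have hr : 1 / p = 1 - 1 / q := by rw [hp, one_div_div, sub_div, div_self hq.ne']
  simp only [hr] at hgreedy ⊢
  have : Nontrivial X := by
    by_contra h
    rw [not_nontrivial_iff_subsingleton] at h
    simpa [(Fn 0).opNorm_subsingleton] using (hFn 0).1
  have hD₁ : D ⊆ Metric.closedBall 0 1 := fun g hg => mem_closedBall_zero_iff.2 (hD g hg)
  have hf₁ : ‖f‖ ≤ 1 := mem_closedBall_zero_iff.1 <| closure_minimal
    (convexHull_min hD₁ (convex_closedBall 0 1)) Metric.isClosed_closedBall hf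
  have hG₁ (n : ℕ) : ‖G n‖ ≤ 1 := mem_closedBall_zero_iff.1 <|
    mem_of_incremental_average (convex_closedBall 0 1) (by simp [hG0])
      (fun n hn => hD₁ (hφD n hn)) hG n
  have hres (k : ℕ) :
      f - G (k + 1) = (f - G k) - ((k : ℝ) + 1)⁻¹ • ((φ (k + 1) - f) + (f - G k)) := by
    rw [hG (k + 1) k.succ_pos, Nat.add_sub_cancel]
    push_cast
    module
  have hdir (k : ℕ) : ‖(φ (k + 1) - f) + (f - G k)‖ ≤ 2 := by
    rw [sub_add_sub_cancel]
    exact (norm_sub_le_of_le (hD _ (hφD _ k.succ_pos)) (hG₁ k)).trans_eq one_add_one_eq_two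
  refine le_of_incremental_recursion hq1 hq2 hγ hβ.le
    (half_le_rpow_one_div_of_modulusOfSmoothness_le hρ hq) (a := fun n => ‖f - G n‖)
    ((norm_sub_le_of_le hf₁ (hG₁ 1)).trans_eq one_add_one_eq_two) (fun k _ => ?_)
    (fun k _ hk => ?_) m hm
  · rw [hres k]
    refine (norm_sub_le _ _).trans ?_
    gcongr
    rw [norm_smul, Real.norm_of_nonneg (by positivity), mul_comm]
    exact mul_le_mul_of_nonneg_right (hdir k) (by positivity)
  · have hε := hgreedy (k + 1) k.succ_pos
    rw [Nat.add_sub_cancel] at hε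
    push_cast at hε
    rw [hres k]
    exact norm_sub_smul_add_le_of_norming hρ hq hγ.le (hFn k).1.le (hFn k).2
      (norm_pos_iff.1 hk) hε (hdir k) (by positivity)
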